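/- Let d > 1, S_n = Z[y_0,…,y_n]/(y_i^d - 1), φ_n = (y_0 - 1)(y_1 - y_0)⋯(y_n - y_{n-1}), and u_n = Σ_{k=0}^{d-1} y_n^k. Consider the action of the cyclic group μ_d on the ideal S_n·φ_n in which a chosen generator acts as multiplication by y_n. Then the group of invariants of this action equals the ideal (S_{n-1}·φ_{n-1} ∩ S_{n-1}·(1 - y_{n-1}))·u_n, where S_{n-1} = Z[y_0,…,y_{n-1}]/(y_i^d - 1) is viewed inside S_n. -/

import Mathlib

/-- `S_n = ℤ[y_0,…,y_n]/(y_0^d - 1, …, y_n^d - 1)`, the group ring of `(μ_d)^{n+1}`. -/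
abbrev Sring (d n : ℕ) : Type :=
  MvPolynomial (Fin (n + 1)) ℤ ⧸
    Ideal.span (Set.range fun i : Fin (n + 1) =>
      (MvPolynomial.X i : MvPolynomial (Fin (n + 1)) ℤ) ^ d - 1)

open Fin.NatCast in
/-- The class of the variable `y_i` in `S_n` (indices taken mod `n+1`). -/
noncomputable def yS (d n : ℕ) (i : ℕ) : Sring d n :=
  Ideal.Quotient.mk _ (MvPolynomial.X (i : Fin (n + 1)))

/-- `φ_m = (y_0 - 1)(y_1 - y_0)⋯(y_m - y_{m-1})`, for `m ≤ n`, in `S_n`. -/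
noncomputable def phiS (d n m : ℕ) : Sring d n :=
  (yS d n 0 - 1) * ∏ i ∈ Finset.range m, (yS d n (i + 1) - yS d n i)

/-- The norm element `u_n = 1 + y_n + ⋯ + y_n^{d-1}` in `S_n`. -/
noncomputable def uS (d n : ℕ) : Sring d n :=
  ∑ k ∈ Finset.range d, yS d n n ^ k

/-!
Write `S_n = S_{n-1}[X]/(X^d - 1)` with `X = y_n` and `u = ∑_{i<d} X^i`. Over any ring `R`, the
annihilator of `X - 1` in `R[X]/(X^d - 1)` is generated by `u`, and `t u = t(1) u`; so an invariant
element is `c u` with `c ∈ R`. If `c u` is a multiple of `φ_{n-1} (X - y_{n-1})`, comparing constant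
coordinates gives `φ_{n-1} ∣ c`, and specialising `X ↦ y_{n-1}` gives `c u(y_{n-1}) = 0`, i.e.
`(1 - y_{n-1}) ∣ c`, because the annihilator of the norm element of `S_{n-1}` is generated by
`y_{n-1} - 1`. Conversely `b u ≡ b u(y_{n-1}) = 0` modulo `X - y_{n-1}` when `(1 - y_{n-1}) ∣ b`.
-/

open Polynomial Finset

namespace AdjoinRoot

variable {R : Type*} [CommRing R]

theorem mk_dvd_of_mk_mul_eq_zero {f p q : R[X]} (hp : p.Monic) (hf : p * q = f)
    {z : AdjoinRoot f} (hz : mk f p * z = 0) : mk f q ∣ z := by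
  induction z using AdjoinRoot.induction_on with | ih g =>
  rw [← map_mul, mk_eq_zero] at hz
  obtain ⟨h, hh⟩ := hz
  refine ⟨mk f h, ?_⟩
  rw [← map_mul, hp.isRegular.left (hh.trans (by rw [← hf, mul_assoc]))]

variable {d : ℕ}

theorem root_pow_eq_one : root (X ^ d - 1 : R[X]) ^ d = 1 := by
  rw [← sub_eq_zero, ← mk_X, ← map_pow, ← map_one (mk _), ← map_sub, mk_self]

theorem geom_sum_root_dvd_of_root_sub_one_mul_eq_zero {z : AdjoinRoot (X ^ d - 1 : R[X])}
    (hz : (root _ - 1) * z = 0) : (∑ i ∈ range d, root (X ^ d - 1 : R[X]) ^ i) ∣ z := by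
  have := mk_dvd_of_mk_mul_eq_zero (f := X ^ d - 1) (monic_X_sub_C (1 : R))
    (by rw [C_1, mul_geom_sum]) (z := z) (by simpa [map_sum] using hz)
  simpa [map_sum] using this

theorem root_sub_one_dvd_of_geom_sum_root_mul_eq_zero (hd : d ≠ 0)
    {z : AdjoinRoot (X ^ d - 1 : R[X])}
    (hz : (∑ i ∈ range d, root (X ^ d - 1 : R[X]) ^ i) * z = 0) : root _ - 1 ∣ z := by
  have := mk_dvd_of_mk_mul_eq_zero (f := X ^ d - 1) (monic_geom_sum_X (R := R) hd)
    (geom_sum_mul X d) (z := z) (by simpa [map_sum] using hz)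
  simpa [map_sum] using this

theorem exists_mul_geom_sum_root_eq_of (t : AdjoinRoot (X ^ d - 1 : R[X])) :
    ∃ c : R, t * ∑ i ∈ range d, root (X ^ d - 1 : R[X]) ^ i =
      of _ c * ∑ i ∈ range d, root _ ^ i := by
  induction t using AdjoinRoot.induction_on with | ih g =>
  obtain ⟨h, hh⟩ := X_sub_C_dvd_sub_C_eval (a := (1 : R)) (p := g)
  refine ⟨g.eval 1, ?_⟩
  replace hh := congrArg (mk (X ^ d - 1 : R[X])) hh
  rw [map_sub, mk_C, map_mul, map_sub, mk_X, mk_C, map_one] at hh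
  linear_combination (∑ i ∈ range d, root (X ^ d - 1 : R[X]) ^ i) * hh +
    mk _ h * (mul_geom_sum (root (X ^ d - 1 : R[X])) d) +
    mk _ h * (root_pow_eq_one (R := R) (d := d))

-- The coordinate of `1` in the basis `1, root, …, root ^ (d - 1)` is `R`-linear and sends the
-- norm element to `1`.
theorem dvd_of_of_dvd_of_mul_geom_sum_root (hd : d ≠ 0) {φ c : R}
    (h : of (X ^ d - 1 : R[X]) φ ∣ of _ c * ∑ i ∈ range d, root (X ^ d - 1 : R[X]) ^ i) :
    φ ∣ c := by
  nontriviality R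
  have hq : (X ^ d - 1 : R[X]).Monic := by simpa using monic_X_pow_sub_C (1 : R) hd
  let L : AdjoinRoot (X ^ d - 1 : R[X]) →ₗ[R] R := (lcoeff R 0).comp (modByMonicHom hq)
  have hL : ∀ i ∈ range d, L (root _ ^ i) = if i = 0 then 1 else 0 := by
    intro i hi
    have hdeg : (X ^ i : R[X]).degree < (X ^ d - 1 : R[X]).degree := by
      rw [degree_X_pow, ← C_1, degree_X_pow_sub_C (Nat.pos_of_ne_zero hd)]
      exact_mod_cast mem_range.1 hi
    simp [L, ← mk_X, ← map_pow, (modByMonic_eq_self_iff hq).2 hdeg, coeff_X_pow, eq_comm]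
  obtain ⟨z, hz⟩ := h
  refine ⟨L z, ?_⟩
  have := congrArg L hz
  rw [← smul_eq_mul, ← smul_eq_mul] at this
  simpa [← algebraMap_eq, ← Algebra.smul_def, map_sum, sum_congr rfl hL, Nat.pos_of_ne_zero hd]
    using this

theorem exists_eq_of_mul_geom_sum_of_root_mul_eq_self (hd : d ≠ 0) {φ y : R} (hy : y ^ d = 1)
    (hann : ∀ c : R, c * ∑ i ∈ range d, y ^ i = 0 → 1 - y ∣ c)
    {a : AdjoinRoot (X ^ d - 1 : R[X])} (ha : of _ φ * (root _ - of _ y) ∣ a)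
    (hinv : root _ * a = a) :
    ∃ c : R, φ ∣ c ∧ 1 - y ∣ c ∧ a = of _ c * ∑ i ∈ range d, root _ ^ i := by
  obtain ⟨t, rfl⟩ := geom_sum_root_dvd_of_root_sub_one_mul_eq_zero (z := a)
    (by linear_combination hinv)
  obtain ⟨c, hc⟩ := exists_mul_geom_sum_root_eq_of t
  rw [mul_comm _ t, hc] at ha ⊢
  refine ⟨c, dvd_of_of_dvd_of_mul_geom_sum_root hd (dvd_of_mul_right_dvd ha), hann c ?_, rfl⟩
  obtain ⟨s, hs⟩ := ha
  -- evaluate at `root ↦ y`, which kills `root - y`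
  have := congrArg (lift (RingHom.id R) y (by simp [hy])) hs
  simpa only [map_mul, map_sub, map_sum, map_pow, lift_of, lift_root, RingHom.id_apply, sub_self,
    mul_zero, zero_mul] using this

end AdjoinRoot

theorem mul_sub_dvd_mul_geom_sum {S : Type*} [CommRing S] {d : ℕ} {x y φ b : S}
    (hy : y ^ d = 1) (hφ : φ ∣ b) (hb : 1 - y ∣ b) :
    φ * (x - y) ∣ b * ∑ i ∈ range d, x ^ i := by
  obtain ⟨q, rfl⟩ := hb
  have hsub : x - y ∣ ∑ i ∈ range d, x ^ i - ∑ i ∈ range d, y ^ i := by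
    rw [← sum_sub_distrib]
    exact dvd_sum fun i _ => sub_dvd_pow_sub_pow x y i
  have hrw : (1 - y) * q * ∑ i ∈ range d, x ^ i =
      (1 - y) * q * (∑ i ∈ range d, x ^ i - ∑ i ∈ range d, y ^ i) := by
    linear_combination (-q) * geom_sum_mul y d - q * hy
  rw [hrw]
  exact mul_dvd_mul hφ hsub

-- `Sring d n` is `MuGroupRing ℤ d (n + 1)`; allowing `m = 0` lets `S_0` be adjoined to `ℤ` too.
abbrev MuGroupRing (k : Type*) [CommRing k] (d m : ℕ) : Type _ :=
  MvPolynomial (Fin m) k ⧸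
    Ideal.span (Set.range fun i : Fin m => (MvPolynomial.X i : MvPolynomial (Fin m) k) ^ d - 1)

noncomputable section

namespace MuGroupRing

variable {k : Type*} [CommRing k] {d m : ℕ}

variable (k d) in
def y (j : Fin m) : MuGroupRing k d m := Ideal.Quotient.mk _ (MvPolynomial.X j)

theorem y_pow (j : Fin m) : y k d j ^ d = 1 := by
  rw [← sub_eq_zero, y, ← map_pow, ← map_one (Ideal.Quotient.mk _), ← map_sub,
    Ideal.Quotient.eq_zero_iff_mem]
  exact Ideal.subset_span ⟨j, rfl⟩

variable {A : Type*} [CommRing A] [Algebra k A]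

theorem algHom_ext {f g : MuGroupRing k d m →ₐ[k] A} (h : ∀ j, f (y k d j) = g (y k d j)) :
    f = g :=
  Ideal.Quotient.algHom_ext k (MvPolynomial.algHom_ext h)

def lift (v : Fin m → A) (hv : ∀ j, v j ^ d = 1) : MuGroupRing k d m →ₐ[k] A :=
  Ideal.Quotient.liftₐ _ (MvPolynomial.aeval v) fun a ha => by
    rw [← RingHom.mem_ker]
    refine (Ideal.span_le.2 ?_) ha
    rintro _ ⟨j, rfl⟩
    simp [hv]

@[simp]
theorem lift_y (v : Fin m → A) (hv : ∀ j, v j ^ d = 1) (j : Fin m) :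
    lift v hv (y k d j) = v j :=
  MvPolynomial.aeval_X v j

variable (k d m)

def castSuccHom : MuGroupRing k d m →ₐ[k] MuGroupRing k d (m + 1) :=
  lift (fun j => y k d j.castSucc) fun _ => y_pow _

def equivAdjoinRoot :
    MuGroupRing k d (m + 1) ≃ₐ[k] AdjoinRoot (X ^ d - 1 : (MuGroupRing k d m)[X]) :=
  AlgEquiv.ofAlgHom
    (lift (Fin.lastCases (AdjoinRoot.root _) fun j => AdjoinRoot.of _ (y k d j)) fun j => by
      cases j using Fin.lastCases with
      | last => simpa using AdjoinRoot.root_pow_eq_one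
      | cast j => simp [← map_pow, y_pow])
    (AdjoinRoot.liftAlgHom _ (castSuccHom k d m) (y k d (Fin.last m)) (by simp [y_pow]))
    (AdjoinRoot.algHom_ext' (algHom_ext fun j => by simp [castSuccHom]) (by simp))
    (algHom_ext fun j => by
      cases j using Fin.lastCases with
      | last => simp
      | cast j => simp [castSuccHom])

@[simp]
theorem equivAdjoinRoot_y_last :
    equivAdjoinRoot k d m (y k d (Fin.last m)) = AdjoinRoot.root _ := by
  simp [equivAdjoinRoot]

@[simp]
theorem equivAdjoinRoot_y_castSucc (j : Fin m) :
    equivAdjoinRoot k d m (y k d j.castSucc) = AdjoinRoot.of _ (y k d j) := by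
  simp [equivAdjoinRoot]

end MuGroupRing

end

open MuGroupRing

theorem yS_self (d n : ℕ) : yS d n n = y ℤ d (Fin.last n) :=
  congrArg (y ℤ d) (Fin.natCast_eq_last n)

open Fin.NatCast in
theorem yS_succ_of_le (d : ℕ) {n i : ℕ} (hi : i ≤ n) :
    yS d (n + 1) i = y ℤ d (i : Fin (n + 1)).castSucc := by
  rw [← Fin.coe_eq_castSucc, Fin.val_cast_of_lt (by omega)]
  rfl

theorem yS_pow (d n i : ℕ) : yS d n i ^ d = 1 :=
  y_pow _

theorem equivAdjoinRoot_yS_self (d n : ℕ) :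
    equivAdjoinRoot ℤ d n (yS d n n) = AdjoinRoot.root _ := by
  rw [yS_self, equivAdjoinRoot_y_last]

theorem equivAdjoinRoot_yS_of_le (d : ℕ) {n i : ℕ} (hi : i ≤ n) :
    equivAdjoinRoot ℤ d (n + 1) (yS d (n + 1) i) = AdjoinRoot.of _ (yS d n i) := by
  rw [yS_succ_of_le d hi, equivAdjoinRoot_y_castSucc]
  rfl

theorem equivAdjoinRoot_phiS_of_le (d : ℕ) {n m : ℕ} (hm : m ≤ n) :
    equivAdjoinRoot ℤ d (n + 1) (phiS d (n + 1) m) = AdjoinRoot.of _ (phiS d n m) := by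
  simp only [phiS, map_mul, map_sub, map_one, map_prod]
  rw [equivAdjoinRoot_yS_of_le d (Nat.zero_le n)]
  congr 1
  refine prod_congr rfl fun i hi => ?_
  have hi : i < m := mem_range.1 hi
  rw [equivAdjoinRoot_yS_of_le d (by omega : i + 1 ≤ n), equivAdjoinRoot_yS_of_le d (by omega)]

theorem phiS_succ (d n m : ℕ) :
    phiS d n (m + 1) = phiS d n m * (yS d n (m + 1) - yS d n m) := by
  rw [phiS, phiS, prod_range_succ, mul_assoc]

theorem one_sub_yS_dvd_of_mul_uS_eq_zero {d n : ℕ} (hd : d ≠ 0) {c : Sring d n}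
    (hc : c * uS d n = 0) : 1 - yS d n n ∣ c := by
  have hc' : (∑ i ∈ range d, AdjoinRoot.root (X ^ d - 1 : (MuGroupRing ℤ d n)[X]) ^ i) *
      equivAdjoinRoot ℤ d n c = 0 := by
    have := congrArg (equivAdjoinRoot ℤ d n) hc
    rw [map_mul, map_zero, uS, map_sum] at this
    simp only [map_pow, equivAdjoinRoot_yS_self] at this
    rwa [mul_comm]
  obtain ⟨t, ht⟩ := AdjoinRoot.root_sub_one_dvd_of_geom_sum_root_mul_eq_zero hd hc'
  refine ⟨-(equivAdjoinRoot ℤ d n).symm t, (equivAdjoinRoot ℤ d n).injective ?_⟩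
  rw [map_mul, map_neg, map_sub, map_one, AlgEquiv.apply_symm_apply, equivAdjoinRoot_yS_self, ht]
  ring

theorem exists_eq_mul_uS_of_dvd_of_yS_mul_eq_self {d n : ℕ} (hd : d ≠ 0) {a : Sring d (n + 1)}
    (ha : phiS d (n + 1) (n + 1) ∣ a) (hinv : yS d (n + 1) (n + 1) * a = a) :
    ∃ b, (phiS d (n + 1) n ∣ b ∧ 1 - yS d (n + 1) n ∣ b) ∧ a = b * uS d (n + 1) := by
  set e := equivAdjoinRoot ℤ d (n + 1)
  obtain ⟨c, hφ, hy, hc⟩ := AdjoinRoot.exists_eq_of_mul_geom_sum_of_root_mul_eq_self hd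
    (φ := phiS d n n) (yS_pow d n n) (fun c hc => one_sub_yS_dvd_of_mul_uS_eq_zero hd hc)
    (a := e a) (by simpa [e, phiS_succ, equivAdjoinRoot_phiS_of_le, equivAdjoinRoot_yS_of_le,
      equivAdjoinRoot_yS_self] using map_dvd e ha)
    (by simpa [e, equivAdjoinRoot_yS_self] using congrArg e hinv)
  refine ⟨e.symm (AdjoinRoot.of _ c), ⟨?_, ?_⟩, e.injective ?_⟩
  · rw [← map_dvd_iff e, e.apply_symm_apply, equivAdjoinRoot_phiS_of_le d le_rfl]
    exact map_dvd _ hφ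
  · rw [← map_dvd_iff e, e.apply_symm_apply]
    simpa [e, equivAdjoinRoot_yS_of_le] using map_dvd (AdjoinRoot.of _) hy
  · simp [hc, e, uS, map_sum, equivAdjoinRoot_yS_self]

/-- The group of invariants of the `μ_d`-action on the ideal `S_n·φ_n` (a chosen
generator acting as multiplication by `y_n`) equals the ideal
`(S_{n-1}·φ_{n-1} ∩ S_{n-1}·(1 - y_{n-1}))·u_n`. -/
theorem stmt13 (d n : ℕ) (hd : 1 < d) (hn : 1 ≤ n) :
    ∀ a : Sring d n,
      (a ∈ Ideal.span {phiS d n n} ∧ yS d n n * a = a) ↔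
        ∃ b ∈ Ideal.span {phiS d n (n - 1)} ⊓ Ideal.span {1 - yS d n (n - 1)},
          a = b * uS d n := by
  obtain ⟨n, rfl⟩ : ∃ m, n = m + 1 := ⟨n - 1, by omega⟩
  intro a
  simp only [Nat.add_sub_cancel, Submodule.mem_inf, Ideal.mem_span_singleton]
  constructor
  · rintro ⟨ha, hinv⟩
    exact exists_eq_mul_uS_of_dvd_of_yS_mul_eq_self (by omega) ha hinv
  · rintro ⟨b, ⟨hφ, hy⟩, rfl⟩
    refine ⟨?_, ?_⟩
    · rw [phiS_succ]
      exact mul_sub_dvd_mul_geom_sum (yS_pow d (n + 1) n) hφ hy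
    · rw [uS]
      linear_combination b * (mul_geom_sum (yS d (n + 1) (n + 1)) d + yS_pow d (n + 1) (n + 1))
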